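/- Let s be a weak composition, T an s-decreasing tree, and (a,b), (c,d) tree ascents of T with a < c. Let Z and Q be the s-tree rotations of T along (a,b) and (c,d) respectively. If either (a,b) is not a tree ascent of Q or (c,d) is not a tree ascent of Z, then b = c and s(c) > 0. Moreover, if (a,b) is not a tree ascent of Q, then a ∈ T^c_0; and if (c,d) is not a tree ascent of Z, then a ∈ T^c_{s(c)-1}. -/

import Mathlib

open scoped Classical

/-- An `s`-decreasing tree with internal vertices `1,…,n` (the root is `n`), encoded by
recording, for each non-root internal vertex `v`, its parent `parent v` (an internal vertex
with a larger label, so that labels decrease away from the root) and the index `idx v` of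
the child slot of `parent v` (among `0,…,s (parent v)`, left to right) containing `v`.
Distinct internal vertices occupy distinct child slots; all remaining slots are leaves. -/
structure SDecTree (n : ℕ) (s : ℕ → ℕ) where
  parent : ℕ → ℕ
  idx : ℕ → ℕ
  parent_gt : ∀ v, 1 ≤ v → v < n → v < parent v
  parent_le : ∀ v, 1 ≤ v → v < n → parent v ≤ n
  idx_le : ∀ v, 1 ≤ v → v < n → idx v ≤ s (parent v)
  slot_inj : ∀ v w, 1 ≤ v → v < n → 1 ≤ w → w < n →
      parent v = parent w → idx v = idx w → v = w
  parent_out : ∀ v, v = 0 ∨ n ≤ v → parent v = 0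
  idx_out : ∀ v, v = 0 ∨ n ≤ v → idx v = 0

namespace SDecTree

variable {n : ℕ} {s : ℕ → ℕ}

/-- `y` is a weak ancestor of `x`, i.e. `x` is a labeled vertex of the subtree `T^y`. -/
def Descend (T : SDecTree n s) (x y : ℕ) : Prop :=
  ∃ k, T.parent^[k] x = y ∧ ∀ m ≤ k, 1 ≤ T.parent^[m] x ∧ T.parent^[m] x ≤ n

/-- `x` is a labeled vertex of the subtree `T^y_j` rooted at the `j`-th child of `y`. -/
def InSub (T : SDecTree n s) (y j x : ℕ) : Prop :=
  ∃ c, T.Descend x c ∧ T.parent c = y ∧ T.idx c = j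

/-- `x` lies strictly left of `y` in the planar tree `T`. -/
def LeftOf (T : SDecTree n s) (x y : ℕ) : Prop :=
  ∃ z j₁ j₂, j₁ < j₂ ∧ T.InSub z j₁ x ∧ T.InSub z j₂ y

/-- The cardinality `#_T(y,x)` of the pair `(y,x)`: it is `j` if `x ∈ T^y_j`
(so `0` if `x ∈ T^y_0` and `s y` if `x ∈ T^y_{s y}`), `0` if `x` is left of `y`, and
`s y` if `x` is right of `y`; it is `0` for out-of-range pairs. -/
noncomputable def card (T : SDecTree n s) (y x : ℕ) : ℕ :=
  if h : ∃ j, T.InSub y j x then h.choose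
  else if 1 ≤ x ∧ x < y ∧ y ≤ n ∧ ¬ T.LeftOf x y then s y else 0

/-- `x` is a labeled vertex of `T^a ∖ 0`, i.e. of `T^a` with `T^a_0` replaced by a leaf. -/
def InSubMinus0 (T : SDecTree n s) (a x : ℕ) : Prop :=
  x = a ∨ ∃ j, 0 < j ∧ T.InSub a j x

/-- `(a,b)` is a tree ascent of `T`. -/
def TreeAscent (T : SDecTree n s) (a b : ℕ) : Prop :=
  1 ≤ a ∧ a < b ∧ b ≤ n ∧
  (∃ i, i < s b ∧ T.InSub b i a) ∧
  (∀ e j, a < e → e < b → T.InSub e j a → j = s e) ∧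
  (0 < s a → ∀ x, ¬ T.InSub a (s a) x)

end SDecTree

/-- A multi-inversion set (encoded by its multiplicity function) is transitive:
if `a < b < c` then `#(b,a) = 0` or `#(c,a) ≥ #(c,b)`. -/
def IsTransitiveInv (I : ℕ → ℕ → ℕ) : Prop :=
  ∀ a b c, a < b → b < c → I b a = 0 ∨ I c b ≤ I c a

/-- The transitive closure of a multi-inversion set: the smallest (by inclusion, i.e.
pointwise on multiplicities) transitive multi-inversion set containing it. -/
noncomputable def tcInv (I : ℕ → ℕ → ℕ) : ℕ → ℕ → ℕ := fun y x =>
  sInf {m | ∃ J : ℕ → ℕ → ℕ, IsTransitiveInv J ∧ (∀ y' x', I y' x' ≤ J y' x') ∧ J y x = m}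

/-- Add one copy of the inversion `(b,a)` to `I`, capping the multiplicity at `s b`. -/
def addInv (s : ℕ → ℕ) (I : ℕ → ℕ → ℕ) (b a : ℕ) : ℕ → ℕ → ℕ := fun y x =>
  if y = b ∧ x = a then min (I y x + 1) (s y) else I y x

namespace SDecTree

variable {n : ℕ} {s : ℕ → ℕ}

/-- The `s`-weak order: `T ⪯ Z` iff `#_T(y,x) ≤ #_Z(y,x)` for all pairs. -/
def wle (T Z : SDecTree n s) : Prop := ∀ y x, T.card y x ≤ Z.card y x

/-- Strict `s`-weak order. -/
def wlt (T Z : SDecTree n s) : Prop := wle T Z ∧ ¬ wle Z T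

/-- Cover relation in the `s`-weak order. -/
def wcov (T Z : SDecTree n s) : Prop := wlt T Z ∧ ∀ U, wlt T U → wlt U Z → False

/-- `W` is the join of `T` and `Z` in the `s`-weak order. -/
def IsJoin (T Z W : SDecTree n s) : Prop :=
  wle T W ∧ wle Z W ∧ ∀ U, wle T U → wle Z U → wle W U

/-- `Z` is the `s`-tree rotation of `T` along the tree ascent `(a,b)`, i.e.
`inv Z = (inv T + (b,a))^tc`. -/
def IsRotation (T Z : SDecTree n s) (a b : ℕ) : Prop :=
  T.TreeAscent a b ∧
  ∀ y x, 1 ≤ x → x < y → y ≤ n → Z.card y x = tcInv (addInv s T.card b a) y x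

/-- The set `A_T(a,b)` of inversions added by a rotation producing `Z`: the pairs `(f,e)`
with `#_Z(f,e) > #_T(f,e)`. -/
def Aset (T Z : SDecTree n s) : Set (ℕ × ℕ) :=
  {p | T.card p.1 p.2 < Z.card p.1 p.2}

/-- The set `A_T(a,b)` described directly via the transitive closure. -/
def ARot (T : SDecTree n s) (a b : ℕ) : Set (ℕ × ℕ) :=
  {p | T.card p.1 p.2 < tcInv (addInv s T.card b a) p.1 p.2}

/-- The set `F_T(a,c)` (here `b` and `d` are the partners of `a` and `c` in the
respective tree ascents `(a,b)` and `(c,d)`): it is `{(d,e) : e ∈ T^a∖0}` if `b = c`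
and `a ∈ T^c_0`, and empty otherwise. -/
def Fset (T : SDecTree n s) (a b c d : ℕ) : Set (ℕ × ℕ) :=
  {p | b = c ∧ T.InSub c 0 a ∧ p.1 = d ∧ T.InSubMinus0 a p.2}

/-- `T` is an `s`-Tamari tree: `#_T(c,a) ≤ #_T(c,b)` whenever `a < b < c`. -/
def IsTamari (T : SDecTree n s) : Prop :=
  ∀ a b c, a < b → b < c → T.card c a ≤ T.card c b

/-- `(a,b)` is a Tamari tree ascent of `T`: `a` is a non-rightmost child of `b`. -/
def TamariAscent (T : SDecTree n s) (a b : ℕ) : Prop :=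
  1 ≤ a ∧ a < n ∧ T.parent a = b ∧ T.card b a < s b

/-- `Z` is the `s`-Tamari rotation of `T` along the Tamari tree ascent `(a,b)`. -/
def IsTamRotation (T Z : SDecTree n s) (a b : ℕ) : Prop :=
  T.TamariAscent a b ∧
  ∀ y x, 1 ≤ x → x < y → y ≤ n → Z.card y x = tcInv (addInv s T.card b a) y x

/-- Cover relation in the `s`-Tamari lattice. -/
def tamcov (T Z : SDecTree n s) : Prop :=
  IsTamari T ∧ IsTamari Z ∧ wlt T Z ∧ ∀ U, IsTamari U → wlt T U → wlt U Z → False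

/-- `W` is the join of `T` and `Z` in the `s`-Tamari lattice. -/
def IsTamJoin (T Z W : SDecTree n s) : Prop :=
  IsTamari W ∧ wle T W ∧ wle Z W ∧ ∀ U, IsTamari U → wle T U → wle Z U → wle W U

/-- The open interval `(T,Z)` in the `s`-weak order. -/
def OpenInterval (T Z : SDecTree n s) : Set (SDecTree n s) := {U | wlt T U ∧ wlt U Z}

/-- A set of trees forming a chain in the `s`-weak order. -/
def IsChainSet (C : Set (SDecTree n s)) : Prop :=
  C.Pairwise fun U V => wlt U V ∨ wlt V U

/-- The geometric realization of the order complex `Δ(T,Z)` of the open interval `(T,Z)`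
in the `s`-weak order: the space of finitely supported probability vectors on the vertex
set whose support is a chain of the open interval. -/
def orderComplex (T Z : SDecTree n s) : Set (SDecTree n s → ℝ) :=
  {f | (∀ U, 0 ≤ f U) ∧ (Function.support f).Finite ∧
    Function.support f ⊆ OpenInterval T Z ∧ IsChainSet (Function.support f) ∧
    ∑ᶠ U, f U = 1}

/-- The geometric realization of the order complex of the open interval `(T,Z)` in the
`s`-Tamari lattice. -/
def tamOrderComplex (T Z : SDecTree n s) : Set (SDecTree n s → ℝ) :=
  {f | (∀ U, 0 ≤ f U) ∧ (Function.support f).Finite ∧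
    Function.support f ⊆ {U | IsTamari U ∧ wlt T U ∧ wlt U Z} ∧
    IsChainSet (Function.support f) ∧ ∑ᶠ U, f U = 1}

end SDecTree

/-- The list of labels of the consecutive cover relations along a saturated chain,
recorded as a list of poset elements. -/
def labelsOf {α : Type*} (lab : α → α → ℕ) (L : List α) : List ℕ :=
  (L.zip L.tail).map fun p => lab p.1 p.2

/-!
The rotation of `T` along a tree ascent `(u, v)` has an explicit inversion table: `inv(T)` with
one more copy of `(v, x)` for every `x ∈ T^u ∖ 0`. Condition (ii) of the ascent is what makes
this table transitive, so it is the transitive closure of `inv(T) + (v, u)`. A tree is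
determined by its cards, since `x ∈ T^y_j` iff `#(y, x) = j` and `#(z, x) = #(z, y)` for all
`z > y`; so membership in the rotated tree can be read off the table, and it agrees with
membership in `T` whenever `x` and `y` lie on the same side of `T^u ∖ 0`. Condition (iii)
(`T^u_{s(u)}` is a leaf) lets one decide that side from the card at `u`. Going through the
three ascent conditions of `(a, b)` after rotating along `(c, d)`, and of `(c, d)` after
rotating along `(a, b)`, this argument only breaks down when `b = c` and `a ∈ T^c_0`,
respectively when `b = c` and `a ∈ T^c_{s(c)-1}`.
-/

lemma tcInv_eq_of_le {I K : ℕ → ℕ → ℕ} (hK : IsTransitiveInv K)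
    (hIK : ∀ y x, I y x ≤ K y x)
    (hmin : ∀ J, IsTransitiveInv J → (∀ y x, I y x ≤ J y x) → ∀ y x, K y x ≤ J y x) :
    tcInv I = K := by
  funext y x
  apply le_antisymm
  · exact Nat.sInf_le ⟨K, hK, hIK, rfl⟩
  · exact le_csInf ⟨_, K, hK, hIK, rfl⟩ fun m ⟨J, hJ, hIJ, hm⟩ => hm ▸ hmin J hJ hIJ y x

namespace SDecTree

open Relation

variable {n : ℕ} {s : ℕ → ℕ} {T Z Q : SDecTree n s} {x y z u v w i j k a b c d e : ℕ}

def IsChild (T : SDecTree n s) (x y : ℕ) : Prop :=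
  1 ≤ x ∧ x < n ∧ T.parent x = y

lemma IsChild.lt (h : T.IsChild x y) : x < y :=
  h.2.2 ▸ T.parent_gt x h.1 h.2.1

lemma IsChild.le_n (h : T.IsChild x y) : y ≤ n :=
  h.2.2 ▸ T.parent_le x h.1 h.2.1

lemma isChild_of_parent_eq (hx : 1 ≤ x) (hy : 1 ≤ y) (h : T.parent x = y) : T.IsChild x y := by
  refine ⟨hx, ?_, h⟩
  by_contra hxn
  rw [T.parent_out x (Or.inr (by omega))] at h
  omega

lemma descend_iff : T.Descend x y ↔ 1 ≤ x ∧ x ≤ n ∧ ReflTransGen T.IsChild x y := by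
  constructor
  · rintro ⟨k, rfl, hk⟩
    induction k generalizing x with
    | zero =>
      obtain ⟨hx1, hxn⟩ : 1 ≤ x ∧ x ≤ n := by simpa using hk 0 le_rfl
      exact ⟨hx1, hxn, .refl⟩
    | succ k ih =>
      obtain ⟨hx1, hxn⟩ : 1 ≤ x ∧ x ≤ n := by simpa using hk 0 (Nat.zero_le _)
      have hc : T.IsChild x (T.parent x) :=
        isChild_of_parent_eq hx1 (by simpa using (hk 1 (by omega)).1) rfl
      have htail := ih (x := T.parent x) fun m hm => by
        simpa only [← Function.iterate_succ_apply] using hk (m + 1) (by omega)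
      exact ⟨hx1, hxn, .head hc (by simpa only [Function.iterate_succ_apply] using htail.2.2)⟩
  · rintro ⟨hx1, hxn, h⟩
    induction h using ReflTransGen.head_induction_on with
    | refl => exact ⟨0, rfl, fun m hm => by simpa [Nat.le_zero.mp hm] using ⟨hx1, hxn⟩⟩
    | head hc _ ih =>
      obtain ⟨k, hk, hb⟩ := ih (by have := hc.lt; omega) hc.le_n
      refine ⟨k + 1, by rwa [Function.iterate_succ_apply, hc.2.2], fun m hm => ?_⟩
      rcases m with _ | m
      · exact ⟨hx1, hxn⟩
      · simpa only [Function.iterate_succ_apply, hc.2.2] using hb m (by omega)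

lemma Descend.left_mem (h : T.Descend x y) : 1 ≤ x ∧ x ≤ n :=
  ⟨(descend_iff.mp h).1, (descend_iff.mp h).2.1⟩

lemma Descend.reflTransGen (h : T.Descend x y) : ReflTransGen T.IsChild x y :=
  (descend_iff.mp h).2.2

lemma le_of_reflTransGen (h : ReflTransGen T.IsChild x y) : x ≤ y := by
  induction h with
  | refl => exact le_rfl
  | tail _ hc ih => exact ih.trans hc.lt.le

lemma Descend.le (h : T.Descend x y) : x ≤ y :=
  le_of_reflTransGen h.reflTransGen

lemma Descend.right_mem (h : T.Descend x y) : 1 ≤ y ∧ y ≤ n := by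
  rcases h.reflTransGen.cases_tail with rfl | ⟨c, _, hc⟩
  · exact h.left_mem
  · exact ⟨by have := hc.1; have := hc.lt; omega, hc.le_n⟩

lemma descend_self (h1 : 1 ≤ x) (h2 : x ≤ n) : T.Descend x x :=
  descend_iff.mpr ⟨h1, h2, .refl⟩

lemma Descend.trans (h : T.Descend x y) (h' : T.Descend y z) : T.Descend x z :=
  descend_iff.mpr ⟨h.left_mem.1, h.left_mem.2, h.reflTransGen.trans h'.reflTransGen⟩

lemma IsChild.descend (h : T.IsChild x y) : T.Descend x y :=
  descend_iff.mpr ⟨h.1, h.2.1.le, .single h⟩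

lemma Descend.total (h : T.Descend x y) (h' : T.Descend x z) :
    T.Descend y z ∨ T.Descend z y :=
  (ReflTransGen.total_of_right_unique (fun _ _ _ h h' => h.2.2.symm.trans h'.2.2)
    h.reflTransGen h'.reflTransGen).imp
    (fun hyz => descend_iff.mpr ⟨h.right_mem.1, h.right_mem.2, hyz⟩)
    (fun hzy => descend_iff.mpr ⟨h'.right_mem.1, h'.right_mem.2, hzy⟩)

lemma Descend.exists_child (h : T.Descend x y) (hne : x ≠ y) :
    ∃ c, T.Descend x c ∧ T.IsChild c y := by
  rcases h.reflTransGen.cases_tail with rfl | ⟨c, hxc, hc⟩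
  · exact absurd rfl hne
  · exact ⟨c, descend_iff.mpr ⟨h.left_mem.1, h.left_mem.2, hxc⟩, hc⟩

lemma Descend.eq_of_parent_eq {c c' : ℕ} (h : T.Descend x c) (h' : T.Descend x c')
    (hp : T.parent c = T.parent c') : c = c' := by
  wlog hcc' : T.Descend c c' generalizing c c'
  · exact (this h' h hp.symm ((h.total h').resolve_left hcc')).symm
  rcases hcc'.reflTransGen.cases_head with hcc' | ⟨d, hcd, hdc'⟩
  · exact hcc'
  · have hc' : T.IsChild c' d := isChild_of_parent_eq h'.right_mem.1
      (by have := hcd.1; have := hcd.lt; omega) (hp.symm.trans hcd.2.2)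
    have := le_of_reflTransGen hdc'
    have := hc'.lt
    omega

lemma descend_root (h1 : 1 ≤ x) (h2 : x ≤ n) : T.Descend x n := by
  induction hm : n - x using Nat.strong_induction_on generalizing x with
  | _ m ih =>
    rcases h2.lt_or_eq with hlt | rfl
    · have hc : T.IsChild x (T.parent x) := ⟨h1, hlt, rfl⟩
      have := hc.lt
      exact hc.descend.trans (ih _ (by omega) (by omega) hc.le_n rfl)
    · exact descend_self h1 le_rfl

lemma InSub.left_mem (h : T.InSub y j x) : 1 ≤ x ∧ x ≤ n := by
  obtain ⟨c, hc, -⟩ := h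
  exact hc.left_mem

lemma InSub.le_n (h : T.InSub y j x) : y ≤ n := by
  obtain ⟨c, hc, rfl, -⟩ := h
  rcases hc.right_mem.2.lt_or_eq with hlt | rfl
  · exact T.parent_le c hc.right_mem.1 hlt
  · simp [T.parent_out _ (Or.inr le_rfl)]

lemma InSub.exists_child (hy : 1 ≤ y) (h : T.InSub y j x) :
    ∃ c, T.Descend x c ∧ T.IsChild c y ∧ T.idx c = j := by
  obtain ⟨c, hc, hp, hi⟩ := h
  exact ⟨c, hc, isChild_of_parent_eq hc.right_mem.1 hy hp, hi⟩

lemma InSub.descend (hy : 1 ≤ y) (h : T.InSub y j x) : T.Descend x y := by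
  obtain ⟨c, hc, hcy, -⟩ := h.exists_child hy
  exact hc.trans hcy.descend

lemma InSub.lt (hy : 1 ≤ y) (h : T.InSub y j x) : x < y := by
  obtain ⟨c, hc, hcy, -⟩ := h.exists_child hy
  exact hc.le.trans_lt hcy.lt

lemma InSub.le_s (hy : 1 ≤ y) (h : T.InSub y j x) : j ≤ s y := by
  obtain ⟨c, -, hcy, rfl⟩ := h.exists_child hy
  exact hcy.2.2 ▸ T.idx_le c hcy.1 hcy.2.1

lemma InSub.one_le (h : T.InSub y j x) (hj : j ≠ 0) : 1 ≤ y := by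
  obtain ⟨c, hc, rfl, rfl⟩ := h
  by_contra hp
  have hcn : c = n := by
    by_contra hcn
    have := T.parent_gt c hc.right_mem.1 (lt_of_le_of_ne hc.right_mem.2 hcn)
    omega
  exact hj (hcn ▸ T.idx_out n (Or.inr le_rfl))

lemma InSub.unique {j' : ℕ} (h : T.InSub y j x) (h' : T.InSub y j' x) : j = j' := by
  obtain ⟨c, hc, hp, rfl⟩ := h
  obtain ⟨c', hc', hp', rfl⟩ := h'
  rw [hc.eq_of_parent_eq hc' (hp.trans hp'.symm)]

lemma InSub.of_descend (hxu : T.Descend x u) (h : T.InSub w k u) : T.InSub w k x := by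
  obtain ⟨c, hc, hp, hi⟩ := h
  exact ⟨c, hxu.trans hc, hp, hi⟩

lemma IsChild.insub {c : ℕ} (h : T.IsChild c y) : T.InSub y (T.idx c) c :=
  ⟨c, descend_self h.1 h.2.1.le, h.2.2, rfl⟩

lemma Descend.exists_insub (h : T.Descend x y) (hne : x ≠ y) : ∃ j, T.InSub y j x := by
  obtain ⟨c, hxc, hcy⟩ := h.exists_child hne
  exact ⟨T.idx c, hcy.insub.of_descend hxc⟩

lemma InSub.of_descend_of_descend (hxw : T.Descend x w) (hwy : T.Descend w y) (hne : w ≠ y)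
    (h : T.InSub y k x) : T.InSub y k w := by
  obtain ⟨j, hj⟩ := hwy.exists_insub hne
  rwa [h.unique (hj.of_descend hxw)]

lemma descend_or_descend_or_fork (hx : 1 ≤ x) (hxn : x ≤ n) (hy : 1 ≤ y) (hyn : y ≤ n) :
    T.Descend x y ∨ T.Descend y x ∨
      ∃ w k k', 1 ≤ w ∧ k ≠ k' ∧ T.InSub w k x ∧ T.InSub w k' y := by
  have hex : ∃ w, T.Descend x w ∧ T.Descend y w :=
    ⟨n, descend_root hx hxn, descend_root hy hyn⟩
  obtain ⟨hxw, hyw⟩ := Nat.find_spec hex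
  set w := Nat.find hex
  by_cases hwy : y = w
  · exact Or.inl (hwy ▸ hxw)
  by_cases hwx : x = w
  · exact Or.inr (Or.inl (hwx ▸ hyw))
  obtain ⟨c, hxc, hcw⟩ := hxw.exists_child hwx
  obtain ⟨c', hyc', hc'w⟩ := hyw.exists_child hwy
  have hcc' : c ≠ c' := by
    rintro rfl
    exact Nat.find_min hex hcw.lt ⟨hxc, hyc'⟩
  refine Or.inr (Or.inr ⟨w, T.idx c, T.idx c', hxw.right_mem.1, fun hi => hcc' ?_,
    hcw.insub.of_descend hxc, hc'w.insub.of_descend hyc'⟩)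
  exact T.slot_inj c c' hcw.1 hcw.2.1 hc'w.1 hc'w.2.1 (hcw.2.2.trans hc'w.2.2.symm) hi

lemma LeftOf.exists_fork (h : T.LeftOf x y) :
    ∃ w k k', 1 ≤ w ∧ k < k' ∧ T.InSub w k x ∧ T.InSub w k' y := by
  obtain ⟨w, k, k', hk, hx, hy⟩ := h
  exact ⟨w, k, k', hy.one_le (by omega), hk, hx, hy⟩

lemma LeftOf.lt_of_insub {k' : ℕ} (hL : T.LeftOf x y) (hw : 1 ≤ w) (hx : T.InSub w k x)
    (hy : T.InSub w k' y) (hne : k ≠ k') : k < k' := by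
  obtain ⟨w', m, m', hw', hm, hx', hy'⟩ := hL.exists_fork
  rcases (hx.descend hw).total (hx'.descend hw') with h | h
  · by_cases he : w = w'
    · subst he
      rw [hx.unique hx', hy.unique hy']
      exact hm
    · have e1 := hx'.of_descend_of_descend (hx.descend hw) h he
      have e2 := hy'.of_descend_of_descend (hy.descend hw) h he
      exact absurd (e1.unique e2) hm.ne
  · by_cases he : w' = w
    · subst he
      rw [hx.unique hx', hy.unique hy']
      exact hm
    · have e1 := hx.of_descend_of_descend (hx'.descend hw') h he
      have e2 := hy.of_descend_of_descend (hy'.descend hw') h he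
      exact absurd (e1.unique e2) hne

lemma LeftOf.asymm (h : T.LeftOf x y) : ¬ T.LeftOf y x := by
  intro h'
  obtain ⟨w, k, k', hw, hk, hx, hy⟩ := h.exists_fork
  exact absurd (h'.lt_of_insub hw hy hx hk.ne') (by omega)

lemma LeftOf.not_descend (h : T.LeftOf x y) : ¬ T.Descend x y := by
  intro hd
  obtain ⟨w, k, k', -, hk, hx, hy⟩ := h.exists_fork
  exact hk.ne (hx.unique (hy.of_descend hd))

lemma LeftOf.not_descend_symm (h : T.LeftOf x y) : ¬ T.Descend y x := by
  intro hd
  obtain ⟨w, k, k', -, hk, hx, hy⟩ := h.exists_fork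
  exact hk.ne ((hx.of_descend hd).unique hy)

lemma LeftOf.of_descend_left {x' : ℕ} (hd : T.Descend x' x) (h : T.LeftOf x y) :
    T.LeftOf x' y := by
  obtain ⟨w, k, k', hk, hx, hy⟩ := h
  exact ⟨w, k, k', hk, hx.of_descend hd, hy⟩

lemma LeftOf.of_descend_right {y' : ℕ} (hd : T.Descend y' y) (h : T.LeftOf x y) :
    T.LeftOf x y' := by
  obtain ⟨w, k, k', hk, hx, hy⟩ := h
  exact ⟨w, k, k', hk, hx, hy.of_descend hd⟩

lemma leftOf_or_leftOf_of_insub {k' : ℕ} (hx : T.InSub w k x) (hy : T.InSub w k' y)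
    (hne : k ≠ k') : T.LeftOf x y ∨ T.LeftOf y x := by
  rcases hne.lt_or_gt with hk | hk
  · exact Or.inl ⟨w, k, k', hk, hx, hy⟩
  · exact Or.inr ⟨w, k', k, hk, hy, hx⟩

lemma descend_or_leftOf_or_leftOf (hx : 1 ≤ x) (hxy : x < y) (hyn : y ≤ n) :
    T.Descend x y ∨ T.LeftOf x y ∨ T.LeftOf y x := by
  rcases descend_or_descend_or_fork hx (by omega) (by omega) hyn with
    h | h | ⟨w, k, k', -, hk, h, h'⟩
  · exact Or.inl h
  · exact absurd h.le (by omega)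
  · exact Or.inr (leftOf_or_leftOf_of_insub h h' hk)

lemma card_of_insub (h : T.InSub y j x) : T.card y x = j := by
  have hex : ∃ j, T.InSub y j x := ⟨j, h⟩
  rw [card, dif_pos hex]
  exact hex.choose_spec.unique h

lemma card_eq_zero_of_leftOf (h : T.LeftOf x y) : T.card y x = 0 := by
  obtain ⟨w, k, k', -, -, -, hy⟩ := h.exists_fork
  rw [card, dif_neg fun ⟨j, hj⟩ => h.not_descend (hj.descend hy.left_mem.1),
    if_neg fun hc => hc.2.2.2 h]

lemma card_eq_s_of_leftOf (h : T.LeftOf y x) (hxy : x < y) : T.card y x = s y := by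
  obtain ⟨w, k, k', -, -, hy, hx⟩ := h.exists_fork
  rw [card, dif_neg fun ⟨j, hj⟩ => h.not_descend_symm (hj.descend hy.left_mem.1),
    if_pos ⟨hx.left_mem.1, hxy, hy.left_mem.2, h.asymm⟩]

lemma card_eq_zero_of_not_le (h : ¬ y ≤ n) : T.card y x = 0 := by
  rw [card, dif_neg fun ⟨j, hj⟩ => h hj.le_n, if_neg fun hc => h hc.2.2.1]

lemma card_le_s : T.card y x ≤ s y := by
  unfold card
  split_ifs with hex
  · by_cases hj : hex.choose = 0
    · omega
    · exact hex.choose_spec.le_s (hex.choose_spec.one_le hj)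
  · exact le_rfl
  · exact Nat.zero_le _

lemma lt_of_card_ne_zero (h : T.card y x ≠ 0) : 1 ≤ x ∧ x < y ∧ y ≤ n := by
  unfold card at h
  split_ifs at h with hex hc
  · have hy := hex.choose_spec.one_le h
    exact ⟨hex.choose_spec.left_mem.1, hex.choose_spec.lt hy, hex.choose_spec.le_n⟩
  · exact ⟨hc.1, hc.2.1, hc.2.2.1⟩
  · exact absurd rfl h

lemma insub_or_leftOf_of_card_ne_zero (h : T.card y x ≠ 0) :
    T.InSub y (T.card y x) x ∨ T.LeftOf y x := by
  obtain ⟨hx, hxy, hyn⟩ := lt_of_card_ne_zero h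
  rcases descend_or_leftOf_or_leftOf hx hxy hyn with hd | hL | hL
  · obtain ⟨j, hj⟩ := hd.exists_insub hxy.ne
    exact Or.inl (card_of_insub hj ▸ hj)
  · exact absurd (card_eq_zero_of_leftOf hL) h
  · exact Or.inr hL

lemma card_eq_of_descend (hd : T.Descend x y) (hyz : y < z) : T.card z x = T.card z y := by
  by_cases hzn : z ≤ n
  · rcases descend_or_leftOf_or_leftOf hd.right_mem.1 hyz hzn with h | h | h
    · obtain ⟨j, hj⟩ := h.exists_insub hyz.ne
      rw [card_of_insub hj, card_of_insub (hj.of_descend hd)]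
    · rw [card_eq_zero_of_leftOf h, card_eq_zero_of_leftOf (h.of_descend_left hd)]
    · rw [card_eq_s_of_leftOf h hyz,
        card_eq_s_of_leftOf (h.of_descend_right hd) (hd.le.trans_lt hyz)]
  · rw [card_eq_zero_of_not_le hzn, card_eq_zero_of_not_le hzn]

lemma card_le_card_of_leftOf (hL : T.LeftOf y x) (hyz : y < z) (hxz : x < z) :
    T.card z y ≤ T.card z x := by
  by_cases hzn : z ≤ n
  swap
  · rw [card_eq_zero_of_not_le hzn]
    exact Nat.zero_le _
  obtain ⟨w, k, k', hw, hk, hy, hx⟩ := hL.exists_fork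
  have hyw := hy.descend hw
  have hxw := hx.descend hw
  by_cases hzw : z = w
  · subst hzw
    rw [card_of_insub hy, card_of_insub hx]
    exact hk.le
  rcases descend_or_descend_or_fork (by omega) hzn hw hy.le_n with
    h | h | ⟨v, m, m', -, hm, hz, hwv⟩
  · obtain ⟨m, hm⟩ := h.exists_insub hzw
    rcases lt_or_ge k m with hkm | hmk
    · rw [card_eq_zero_of_leftOf ⟨w, k, m, hkm, hy, hm⟩]
      exact Nat.zero_le _
    · rw [card_eq_s_of_leftOf ⟨w, m, k', by omega, hm, hx⟩ hxz]
      exact card_le_s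
  · have hwz : w < z := lt_of_le_of_ne h.le (Ne.symm hzw)
    rw [card_eq_of_descend hyw hwz, card_eq_of_descend hxw hwz]
  · rcases leftOf_or_leftOf_of_insub hz hwv hm with h | h
    · rw [card_eq_s_of_leftOf (h.of_descend_right hyw) hyz,
        card_eq_s_of_leftOf (h.of_descend_right hxw) hxz]
    · rw [card_eq_zero_of_leftOf (h.of_descend_left hyw),
        card_eq_zero_of_leftOf (h.of_descend_left hxw)]

lemma isTransitiveInv_card : IsTransitiveInv T.card := by
  intro x y z hxy hyz
  by_cases h : T.card y x = 0
  · exact Or.inl h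
  right
  rcases insub_or_leftOf_of_card_ne_zero h with hI | hL
  · have hy : 1 ≤ y := by have := (lt_of_card_ne_zero h).1; omega
    exact (card_eq_of_descend (hI.descend hy) hyz).ge
  · exact card_le_card_of_leftOf hL hyz (hxy.trans hyz)

lemma insub_iff_card (hx : 1 ≤ x) (hxy : x < y) (hyn : y ≤ n) :
    T.InSub y j x ↔
      (∀ z, y < z → z ≤ n → T.card z x = T.card z y) ∧ T.card y x = j := by
  constructor
  · intro h
    exact ⟨fun z hz _ => card_eq_of_descend (h.descend (by omega)) hz, card_of_insub h⟩
  · rintro ⟨hrow, rfl⟩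
    rcases descend_or_descend_or_fork hx (by omega) (by omega) hyn with
      h | h | ⟨w, k, k', hw, hk, hxw, hyw⟩
    · obtain ⟨j, hj⟩ := h.exists_insub hxy.ne
      rwa [card_of_insub hj]
    · exact absurd h.le (by omega)
    · have := hrow w (hyw.lt hw) hxw.le_n
      rw [card_of_insub hxw, card_of_insub hyw] at this
      exact absurd this hk

lemma InSubMinus0.descend (hu : 1 ≤ u) (hun : u ≤ n) (h : T.InSubMinus0 u x) :
    T.Descend x u := by
  rcases h with rfl | ⟨j, -, hj⟩
  · exact descend_self hu hun
  · exact hj.descend hu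

lemma InSubMinus0.le (hu : 1 ≤ u) (h : T.InSubMinus0 u x) : x ≤ u := by
  rcases h with rfl | ⟨j, -, hj⟩
  · exact le_rfl
  · exact (hj.lt hu).le

lemma InSubMinus0.of_descend (h : T.InSubMinus0 u y) (hyu : y ≠ u) (hxy : T.Descend x y) :
    T.InSubMinus0 u x := by
  obtain ⟨j, hj, hy⟩ := h.resolve_left hyu
  exact Or.inr ⟨j, hj, hy.of_descend hxy⟩

lemma inSubMinus0_iff_of_descend (hxy : T.Descend x y) (hyu : y < u) :
    T.InSubMinus0 u x ↔ T.InSubMinus0 u y := by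
  refine ⟨fun hx => ?_, fun hy => hy.of_descend hyu.ne hxy⟩
  obtain ⟨j, hj, hxu⟩ := hx.resolve_left (by have := hxy.le; omega)
  rcases hxy.total (hxu.descend (by omega)) with hyu' | huy
  · exact Or.inr ⟨j, hj, hxu.of_descend_of_descend hxy hyu' hyu.ne⟩
  · exact absurd huy.le (by omega)

lemma inSubMinus0_of_card_eq {x' c : ℕ} (hleaf : 0 < s c → ∀ x, ¬ T.InSub c (s c) x)
    (hx : T.InSubMinus0 c x) (hxc : x ≠ c) (h : T.card c x' = T.card c x) :
    T.InSubMinus0 c x' := by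
  obtain ⟨j, hj, hjx⟩ := hx.resolve_left hxc
  rw [card_of_insub hjx] at h
  have hne : T.card c x' ≠ 0 := by omega
  rcases insub_or_leftOf_of_card_ne_zero hne with hI | hL
  · exact Or.inr ⟨j, hj, h ▸ hI⟩
  · have hs := card_eq_s_of_leftOf hL (lt_of_card_ne_zero hne).2.1
    exact absurd (h.symm.trans hs ▸ hjx) (hleaf (by omega) x)

lemma LeftOf.leftOf_of_descend (hL : T.LeftOf y x) (hyu : T.Descend y u)
    (hxu : ¬ T.Descend x u) : T.LeftOf u x := by
  obtain ⟨w, k, k', hw, hk, hy, hx⟩ := hL.exists_fork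
  rcases (hy.descend hw).total hyu with hwu | huw
  · exact absurd ((hx.descend hw).trans hwu) hxu
  · by_cases hu : u = w
    · exact absurd (hu ▸ hx.descend hw) hxu
    · exact ⟨w, k, k', hk, hy.of_descend_of_descend hyu huw hu, hx⟩

lemma TreeAscent.card_lt_of_leftOf (hA : T.TreeAscent u v) (hL : T.LeftOf u x) (hxv : x < v) :
    T.card v u < T.card v x := by
  obtain ⟨-, -, -, ⟨i, hi, hiu⟩, hmid, -⟩ := hA
  obtain ⟨w, k, k', hw, hk, hu, hx⟩ := hL.exists_fork
  have hv : 1 ≤ v := by have := hiu.left_mem.1; have := hiu.lt (by omega); omega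
  rcases (hiu.descend hv).total (hu.descend hw) with hvw | hwv
  · by_cases he : v = w
    · subst he
      rwa [card_of_insub hu, card_of_insub hx]
    · have hv' := hu.of_descend_of_descend (hiu.descend hv) hvw he
      rw [card_of_insub hiu, card_eq_s_of_leftOf ⟨w, k, k', hk, hv', hx⟩ hxv]
      exact hi
  · by_cases he : w = v
    · subst he
      rwa [card_of_insub hu, card_of_insub hx]
    · have := hmid w k (hu.lt hw) (lt_of_le_of_ne hwv.le he) hu
      have := hx.le_s hw
      omega

lemma leftOf_of_inSubMinus0 (hu : 1 ≤ u) (hun : u ≤ n) (hy : T.InSubMinus0 u y)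
    (hx : ¬ T.InSubMinus0 u x) (h : T.card y x ≠ 0) : T.LeftOf u x := by
  have hyu := hy.descend hu hun
  rcases insub_or_leftOf_of_card_ne_zero h with hI | hL
  · have hI' := hI.descend (hI.one_le h)
    by_cases he : y = u
    · exact absurd (Or.inr ⟨_, Nat.pos_of_ne_zero h, he ▸ hI⟩) hx
    · exact absurd (hy.of_descend he hI') hx
  by_cases hxu : T.Descend x u
  · obtain ⟨j, hj⟩ := hxu.exists_insub fun he => hx (he ▸ Or.inl rfl)
    have hj0 : j = 0 := by
      by_contra hj0
      exact hx (Or.inr ⟨j, Nat.pos_of_ne_zero hj0, hj⟩)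
    rcases hy with rfl | ⟨jy, hjy, hy⟩
    · exact absurd hxu hL.not_descend_symm
    · exact absurd (hL.lt_of_insub hu hy (hj0 ▸ hj) (by omega)) (by omega)
  · exact hL.leftOf_of_descend hyu hxu

noncomputable def rotCard (T : SDecTree n s) (u v : ℕ) : ℕ → ℕ → ℕ := fun y x =>
  if y = v ∧ T.InSubMinus0 u x then T.card y x + 1 else T.card y x

lemma rotCard_of_ne (h : y ≠ v) : T.rotCard u v y x = T.card y x :=
  if_neg fun h' => h h'.1

lemma rotCard_of_not_inSubMinus0 (h : ¬ T.InSubMinus0 u x) : T.rotCard u v y x = T.card y x :=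
  if_neg fun h' => h h'.2

lemma rotCard_of_inSubMinus0 (h : T.InSubMinus0 u x) : T.rotCard u v v x = T.card v x + 1 :=
  if_pos ⟨rfl, h⟩

lemma card_le_rotCard : T.card y x ≤ T.rotCard u v y x := by
  unfold rotCard
  split_ifs <;> omega

lemma isTransitiveInv_rotCard (hA : T.TreeAscent u v) : IsTransitiveInv (T.rotCard u v) := by
  obtain ⟨hu, huv, hvn, ⟨i, -, hiu⟩, -⟩ := id hA
  have hvu : ∀ {x}, T.InSubMinus0 u x → T.Descend x v := fun hx =>
    (hx.descend hu (by omega)).trans (hiu.descend (by omega))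
  intro x y z hxy hyz
  by_cases h : T.rotCard u v y x = 0
  · exact Or.inl h
  right
  by_cases hzv : z = v
  · subst hzv
    rw [rotCard_of_ne hyz.ne] at h
    by_cases hy : T.InSubMinus0 u y
    · rw [rotCard_of_inSubMinus0 hy, card_eq_of_descend (hy.descend hu (by omega)) huv]
      by_cases hx : T.InSubMinus0 u x
      · rw [rotCard_of_inSubMinus0 hx, card_eq_of_descend (hx.descend hu (by omega)) huv]
      · rw [rotCard_of_not_inSubMinus0 hx]
        exact hA.card_lt_of_leftOf (leftOf_of_inSubMinus0 hu (by omega) hy hx h) (hxy.trans hyz)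
    · rw [rotCard_of_not_inSubMinus0 hy]
      exact ((isTransitiveInv_card x y _ hxy hyz).resolve_left h).trans card_le_rotCard
  · rw [rotCard_of_ne hzv, rotCard_of_ne hzv]
    by_cases hb : y = v ∧ T.InSubMinus0 u x
    · obtain ⟨rfl, hx⟩ := hb
      exact (card_eq_of_descend (hvu hx) hyz).ge
    · have h' : T.card y x ≠ 0 := by rwa [rotCard, if_neg hb] at h
      exact (isTransitiveInv_card x y z hxy hyz).resolve_left h'

lemma addInv_le_rotCard : addInv s T.card v u y x ≤ T.rotCard u v y x := by
  unfold addInv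
  split_ifs with h
  · obtain ⟨rfl, rfl⟩ := h
    rw [rotCard_of_inSubMinus0 (Or.inl rfl)]
    exact min_le_left _ _
  · exact card_le_rotCard

lemma rotCard_le_of_isTransitiveInv (hA : T.TreeAscent u v) {J : ℕ → ℕ → ℕ}
    (hJ : IsTransitiveInv J) (hIJ : ∀ y x, addInv s T.card v u y x ≤ J y x) :
    T.rotCard u v y x ≤ J y x := by
  obtain ⟨hu, huv, hvn, ⟨i, hi, hiu⟩, -⟩ := hA
  by_cases hb : y = v ∧ T.InSubMinus0 u x
  swap
  · have hne : ¬ (y = v ∧ x = u) := fun h => hb ⟨h.1, h.2 ▸ Or.inl rfl⟩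
    have := hIJ y x
    rw [addInv, if_neg hne] at this
    rwa [rotCard, if_neg hb]
  obtain ⟨rfl, hx⟩ := hb
  have hJvu : i + 1 ≤ J y u := by
    have := hIJ y u
    rw [addInv, if_pos ⟨rfl, rfl⟩, card_of_insub hiu] at this
    omega
  rw [rotCard_of_inSubMinus0 hx, card_eq_of_descend (hx.descend hu (by omega)) huv,
    card_of_insub hiu]
  rcases hx with rfl | ⟨j, hj, hjx⟩
  · exact hJvu
  · have hJux : 0 < J u x := by
      have := hIJ u x
      rw [addInv, if_neg fun h => by omega, card_of_insub hjx] at this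
      omega
    have := (hJ x u y (hjx.lt hu) huv).resolve_left hJux.ne'
    omega

lemma tcInv_addInv_eq_rotCard (hA : T.TreeAscent u v) :
    tcInv (addInv s T.card v u) = T.rotCard u v :=
  tcInv_eq_of_le (isTransitiveInv_rotCard hA) (fun _ _ => addInv_le_rotCard)
    fun _ hJ hIJ _ _ => rotCard_le_of_isTransitiveInv hA hJ hIJ

lemma IsRotation.card_eq_rotCard (hZ : T.IsRotation Z u v) (hx : 1 ≤ x) (hxy : x < y)
    (hyn : y ≤ n) : Z.card y x = T.rotCard u v y x := by
  rw [hZ.2 y x hx hxy hyn, tcInv_addInv_eq_rotCard hZ.1]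

lemma IsRotation.insub_iff_rotCard (hZ : T.IsRotation Z u v) (hx : 1 ≤ x) (hxy : x < y)
    (hyn : y ≤ n) :
    Z.InSub y j x ↔ (∀ z, y < z → z ≤ n → T.rotCard u v z x = T.rotCard u v z y) ∧
      T.rotCard u v y x = j := by
  rw [insub_iff_card hx hxy hyn, hZ.card_eq_rotCard hx hxy hyn]
  refine and_congr_left' (forall₂_congr fun z hz => forall_congr' fun hzn => ?_)
  rw [hZ.card_eq_rotCard hx (hxy.trans hz) hzn, hZ.card_eq_rotCard (by omega) hz hzn]

lemma IsRotation.insub_iff (hZ : T.IsRotation Z u v) (hx : 1 ≤ x) (hxy : x < y) (hyn : y ≤ n)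
    (hS : T.InSubMinus0 u x ↔ T.InSubMinus0 u y) (hv : y = v → ¬ T.InSubMinus0 u x) :
    Z.InSub y j x ↔ T.InSub y j x := by
  rw [hZ.insub_iff_rotCard hx hxy hyn, insub_iff_card hx hxy hyn]
  have hcol : T.rotCard u v y x = T.card y x := by
    by_cases hyv : y = v
    · exact rotCard_of_not_inSubMinus0 (hv hyv)
    · exact rotCard_of_ne hyv
  rw [hcol]
  refine and_congr_left' (forall₂_congr fun z _ => forall_congr' fun _ => ?_)
  by_cases hzv : z = v
  · subst hzv
    by_cases hSx : T.InSubMinus0 u x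
    · rw [rotCard_of_inSubMinus0 hSx, rotCard_of_inSubMinus0 (hS.mp hSx), Nat.add_right_cancel_iff]
    · rw [rotCard_of_not_inSubMinus0 hSx, rotCard_of_not_inSubMinus0 (hS.not.mp hSx)]
  · rw [rotCard_of_ne hzv, rotCard_of_ne hzv]

lemma not_inSubMinus0_of_lt (hu : 1 ≤ u) (h : u < x) : ¬ T.InSubMinus0 u x :=
  fun hx => absurd (hx.le hu) (by omega)

lemma TreeAscent.le_of_inSubMinus0 (hab : T.TreeAscent a b) (hac : a < c)
    (hleaf : 0 < s c → ∀ x, ¬ T.InSub c (s c) x) (ha : T.InSubMinus0 c a) : b ≤ c := by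
  obtain ⟨ha1, hab, -, ⟨i, -, hia⟩, hmid, -⟩ := hab
  obtain ⟨j, hj, hja⟩ := ha.resolve_left hac.ne
  rcases (hia.descend (by omega)).total (hja.descend (by omega)) with hbc | -
  · exact hbc.le
  · by_contra hbc
    have := hmid c j hac (by omega) hja
    exact hleaf (by omega) a (this ▸ hja)

lemma IsRotation.insub_of_lt (hQ : T.IsRotation Q c d) (hac : a < c) (hab : T.TreeAscent a b)
    (hia : T.InSub b i a) (h : ¬ (b = c ∧ T.InSub c 0 a)) : Q.InSub b i a := by
  obtain ⟨ha, hab', hbn, -⟩ := id hab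
  obtain ⟨hc, hcd, -, -, -, hleaf⟩ := hQ.1
  have hle := hab.le_of_inSubMinus0 hac hleaf
  refine (hQ.insub_iff ha hab' hbn ?_ fun hbd hS => by have := hle hS; omega).mpr hia
  rcases lt_trichotomy b c with hbc | rfl | hcb
  · exact inSubMinus0_iff_of_descend (hia.descend (by omega)) hbc
  · have hi : i ≠ 0 := fun hi => h ⟨rfl, hi ▸ hia⟩
    exact iff_of_true (Or.inr ⟨i, Nat.pos_of_ne_zero hi, hia⟩) (Or.inl rfl)
  · exact iff_of_false (fun hS => by have := hle hS; omega) (not_inSubMinus0_of_lt hc hcb)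

lemma IsRotation.eq_s_of_lt (hQ : T.IsRotation Q c d) (hac : a < c) (hab : T.TreeAscent a b)
    (hae : a < e) (heb : e < b) (he : Q.InSub e j a) : j = s e := by
  obtain ⟨ha, -, hbn, -, hmid, -⟩ := id hab
  obtain ⟨hc, hcd, hdn, -, -, hleaf⟩ := hQ.1
  have hle := hab.le_of_inSubMinus0 hac hleaf
  have hen : e ≤ n := by omega
  obtain ⟨hrow, hcol⟩ := (hQ.insub_iff_rotCard ha hae hen).mp he
  by_cases hec : e = c
  · subst hec
    have hSa : ¬ T.InSubMinus0 e a := fun hS => by have := hle hS; omega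
    -- row `d` gives `#(d, a) = #(d, c) + 1`, which puts `a` to the right of `c`
    have hd := hrow d hcd hdn
    rw [rotCard_of_not_inSubMinus0 hSa, rotCard_of_inSubMinus0 (Or.inl rfl)] at hd
    rw [rotCard_of_ne hcd.ne] at hcol
    rcases descend_or_leftOf_or_leftOf ha hae hen with h | h | h
    · rw [card_eq_of_descend h hcd] at hd
      omega
    · have := card_le_card_of_leftOf h (hae.trans hcd) hcd
      omega
    · rw [← hcol, card_eq_s_of_leftOf h hae]
  refine hmid e j hae heb ((hQ.insub_iff ha hae hen ?_ fun hed hS => ?_).mp he)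
  · rcases lt_or_gt_of_ne hec with hec | hce
    · have h := hrow c hec (by omega)
      rw [rotCard_of_ne hcd.ne, rotCard_of_ne hcd.ne] at h
      exact ⟨fun hS => inSubMinus0_of_card_eq hleaf hS hac.ne h.symm,
        fun hS => inSubMinus0_of_card_eq hleaf hS hec.ne h⟩
    · exact iff_of_false (fun hS => by have := hle hS; omega) (not_inSubMinus0_of_lt hc hce)
  · have := hle hS
    omega

lemma IsRotation.not_insub_s_of_lt (hQ : T.IsRotation Q c d) (hac : a < c)
    (hab : T.TreeAscent a b) (hsa : 0 < s a) : ¬ Q.InSub a (s a) x := by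
  obtain ⟨ha, hab', hbn, -, -, hleafa⟩ := hab
  obtain ⟨hc, hcd, hdn, -, -, hleaf⟩ := hQ.1
  intro hx
  have hxa := hx.lt ha
  have hx1 := hx.left_mem.1
  have h := ((hQ.insub_iff_rotCard hx1 hxa (by omega)).mp hx).1 c hac (by omega)
  rw [rotCard_of_ne hcd.ne, rotCard_of_ne hcd.ne] at h
  have hS : T.InSubMinus0 c x ↔ T.InSubMinus0 c a :=
    ⟨fun hS => inSubMinus0_of_card_eq hleaf hS (by omega) h.symm,
      fun hS => inSubMinus0_of_card_eq hleaf hS hac.ne h⟩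
  exact hleafa hsa x ((hQ.insub_iff hx1 hxa (by omega) hS fun had => by omega).mp hx)

lemma IsRotation.treeAscent_of_lt (hQ : T.IsRotation Q c d) (hac : a < c)
    (hab : T.TreeAscent a b) (h : ¬ (b = c ∧ T.InSub c 0 a)) : Q.TreeAscent a b := by
  obtain ⟨ha, hab', hbn, ⟨i, hi, hia⟩, -⟩ := id hab
  exact ⟨ha, hab', hbn, ⟨i, hi, hQ.insub_of_lt hac hab hia h⟩,
    fun _ _ => hQ.eq_s_of_lt hac hab, fun hsa _ => hQ.not_insub_s_of_lt hac hab hsa⟩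

lemma IsRotation.eq_and_insub_pred_of_insub_s (hZ : T.IsRotation Z a b) (hac : a < c)
    (hcd : T.TreeAscent c d) (hsc : 0 < s c) (hx : Z.InSub c (s c) x) :
    b = c ∧ T.InSub c (s c - 1) a := by
  obtain ⟨ha, hab, hbn, ⟨i, hi, hia⟩, -⟩ := hZ.1
  obtain ⟨-, hcd, hdn, -, -, hleaf⟩ := hcd
  have hcn : c ≤ n := by omega
  have hxc := hx.lt (by omega)
  have hx1 := hx.left_mem.1
  have hSc : ¬ T.InSubMinus0 a c := not_inSubMinus0_of_lt ha hac
  by_cases hSx : T.InSubMinus0 a x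
  swap
  · exact absurd ((hZ.insub_iff hx1 hxc hcn (iff_of_false hSx hSc) fun _ => hSx).mp hx)
      (hleaf hsc x)
  obtain ⟨hrow, hcol⟩ := (hZ.insub_iff_rotCard hx1 hxc hcn).mp hx
  have hxa := hSx.descend ha (by omega)
  by_cases hbc : b = c
  · subst hbc
    rw [rotCard_of_inSubMinus0 hSx, card_eq_of_descend hxa hac, card_of_insub hia] at hcol
    exact ⟨rfl, (show i = s b - 1 by omega) ▸ hia⟩
  exfalso
  rw [rotCard_of_ne (Ne.symm hbc), card_eq_of_descend hxa hac] at hcol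
  rcases lt_or_gt_of_ne hbc with hbc | hcb
  · refine hleaf hsc a ((insub_iff_card ha hac hcn).mpr ⟨fun z hz hzn => ?_, hcol⟩)
    have := hrow z hz hzn
    rwa [rotCard_of_ne (by omega), rotCard_of_ne (by omega), card_eq_of_descend hxa (by omega)]
      at this
  · -- row `b` gives `#(b, c) = #(b, a) + 1`, impossible once `c` is left of `a`
    have hb := hrow b hcb hbn
    rw [rotCard_of_inSubMinus0 hSx, rotCard_of_not_inSubMinus0 hSc, card_eq_of_descend hxa hab,
      card_of_insub hia] at hb
    rcases insub_or_leftOf_of_card_ne_zero (show T.card c a ≠ 0 by omega) with hI | hL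
    · exact hleaf hsc a (hcol ▸ hI)
    · have := card_le_card_of_leftOf hL hcb hab
      rw [card_of_insub hia] at this
      omega

lemma IsRotation.treeAscent_of_gt (hZ : T.IsRotation Z a b) (hac : a < c)
    (hcd : T.TreeAscent c d) (h : ¬ (b = c ∧ T.InSub c (s c - 1) a)) : Z.TreeAscent c d := by
  obtain ⟨hc, hcd', hdn, ⟨i, hi, hic⟩, hmid, -⟩ := id hcd
  have ha := hZ.1.1
  have hS : ∀ {x}, c ≤ x → ¬ T.InSubMinus0 a x :=
    fun _ => not_inSubMinus0_of_lt ha (by omega)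
  have transfer : ∀ {y j}, c < y → y ≤ n → (Z.InSub y j c ↔ T.InSub y j c) :=
    fun hy hyn => hZ.insub_iff hc hy hyn (iff_of_false (hS le_rfl) (hS hy.le)) fun _ => hS le_rfl
  exact ⟨hc, hcd', hdn, ⟨i, hi, (transfer hcd' hdn).mpr hic⟩,
    fun e j hce hed he => hmid e j hce hed ((transfer hce (by omega)).mp he),
    fun hsc x hx => h (hZ.eq_and_insub_pred_of_insub_s hac hcd hsc hx)⟩

end SDecTree

/-- if `(a,b)` fails to be a tree ascent of `Q` or `(c,d)` fails to be a
tree ascent of `Z`, then `b = c` and `s c > 0`; moreover in the first case `a ∈ T^c_0`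
and in the second case `a ∈ T^c_{s c - 1}`. -/
theorem stop_being_ascent (n : ℕ) (s : ℕ → ℕ) (T Z Q : SDecTree n s)
    (a b c d : ℕ) (hac : a < c)
    (hZ : SDecTree.IsRotation T Z a b) (hQ : SDecTree.IsRotation T Q c d) :
    ((¬ Q.TreeAscent a b ∨ ¬ Z.TreeAscent c d) → b = c ∧ 0 < s c) ∧
    (¬ Q.TreeAscent a b → T.InSub c 0 a) ∧
    (¬ Z.TreeAscent c d → T.InSub c (s c - 1) a) := by
  have hQab := Not.imp_symm (hQ.treeAscent_of_lt hac hZ.1)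
  have hZcd := Not.imp_symm (hZ.treeAscent_of_gt hac hQ.1)
  obtain ⟨-, -, -, ⟨i, hi, -⟩, -⟩ := hZ.1
  refine ⟨fun h => ?_, fun h => (hQab h).2, fun h => (hZcd h).2⟩
  obtain rfl : b = c := h.elim (fun h => (hQab h).1) fun h => (hZcd h).1
  exact ⟨rfl, by omega⟩
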